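/- arXiv:1404.5237 — 3 statements merged into one kernel-verified Lean document; each statement's English description precedes it below -/
import Mathlib

section
/- Janson's correlation inequality: let (A_x)_{x∈S} be a family of independent events in a probability space, let Ω be a finite collection of finite subsets of S, and for ω ∈ Ω let E_ω = ⋂_{x∈ω} A_x. Assume P(E_ω) ≤ 1/2 for every ω ∈ Ω. Then ∏_{ω∈Ω} P(E_ω^c) ≤ P(⋂_{ω∈Ω} E_ω^c) ≤ ∏_{ω∈Ω} P(E_ω^c) · exp(2 ∑ P(E_ω ∩ E_{ω'})), where the last sum runs over unordered pairs {ω, ω'} of distinct elements of Ω with ω ∩ ω' ≠ ∅. -/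
open MeasureTheory ProbabilityTheory Filter

set_option linter.unusedSectionVars false
set_option linter.unusedVariables false

open MeasureTheory ProbabilityTheory Filter MeasurableSpace

namespace JansonAux

variable {U : Type*} [MeasurableSpace U] {S : Type*} [DecidableEq S]

/-- The event `E ω = ⋂_{x ∈ ω} A x`. -/
def jE (A : S → Set U) (s : Finset S) : Set U := ⋂ x ∈ s, A x

/-- The event `⋂_{ω ∈ T} (E ω)ᶜ`. -/
def jD (A : S → Set U) (T : Finset (Finset S)) : Set U := ⋂ ω ∈ T, (jE A ω)ᶜ

/-- σ-algebra generated by the events indexed by `I`. -/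
def jGen (A : S → Set U) (I : Set S) : MeasurableSpace U :=
  MeasurableSpace.generateFrom { t | ∃ n ∈ I, A n = t }

variable {A : S → Set U}

lemma jE_meas (hmeas : ∀ x, MeasurableSet (A x)) (s : Finset S) : MeasurableSet (jE A s) :=
  Finset.measurableSet_biInter _ fun x _ => hmeas x

lemma jD_meas (hmeas : ∀ x, MeasurableSet (A x)) (T : Finset (Finset S)) :
    MeasurableSet (jD A T) :=
  Finset.measurableSet_biInter _ fun ω _ => (jE_meas hmeas ω).compl

lemma jA_measIn {I : Set S} {x : S} (hx : x ∈ I) : MeasurableSet[jGen A I] (A x) :=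
  measurableSet_generateFrom ⟨x, hx, rfl⟩

lemma jE_measIn {I : Set S} {s : Finset S} (h : ↑s ⊆ I) :
    MeasurableSet[jGen A I] (jE A s) :=
  @Finset.measurableSet_biInter U S (jGen A I) _ s fun x hx => jA_measIn (h hx)

lemma jD_measIn {I : Set S} {T : Finset (Finset S)} (h : ∀ ω ∈ T, ↑ω ⊆ I) :
    MeasurableSet[jGen A I] (jD A T) :=
  @Finset.measurableSet_biInter U (Finset S) (jGen A I) _ T fun ω hω =>
    MeasurableSet.compl (jE_measIn (h ω hω))

lemma jE_mem {s : Finset S} {u : U} : u ∈ jE A s ↔ ∀ x ∈ s, u ∈ A x := by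
  simp [jE]

lemma jD_mem {T : Finset (Finset S)} {u : U} : u ∈ jD A T ↔ ∀ ω ∈ T, u ∉ jE A ω := by
  simp [jD]

lemma jE_union (s t : Finset S) : jE A (s ∪ t) = jE A s ∩ jE A t := by
  ext u; simp [jE_mem, Finset.mem_union, or_imp, forall_and]

lemma jD_union (s t : Finset (Finset S)) : jD A (s ∪ t) = jD A s ∩ jD A t := by
  ext u; simp [jD_mem, Finset.mem_union, or_imp, forall_and]

lemma jE_mono {s t : Finset S} (h : s ⊆ t) : jE A t ⊆ jE A s := fun u hu =>
  jE_mem.2 fun x hx => jE_mem.1 hu x (h hx)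

lemma jD_anti {s t : Finset (Finset S)} (h : s ⊆ t) : jD A t ⊆ jD A s := fun u hu =>
  jD_mem.2 fun ω hω => jD_mem.1 hu ω (h hω)

lemma jIndep (P : Measure U) (hmeas : ∀ x, MeasurableSet (A x)) (hindep : iIndepSet A P)
    {I J : Set S} (hIJ : Disjoint I J) {B C : Set U}
    (hB : MeasurableSet[jGen A I] B) (hC : MeasurableSet[jGen A J] C) :
    P (B ∩ C) = P B * P C :=
  ((Indep_iff _ _ _).1 (iIndepSet.indep_generateFrom_of_disjoint hmeas hindep I J hIJ))
    B C hB hC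


/-- Harris-type inequality: an intersection of the `A x` is negatively correlated with any
intersection of complements of such intersections. -/
lemma jHarris (P : Measure U) [IsProbabilityMeasure P]
    (hmeas : ∀ x, MeasurableSet (A x)) (hindep : iIndepSet A P) (s : Finset S) :
    ∀ T : Finset (Finset S), P (jE A s ∩ jD A T) ≤ P (jE A s) * P (jD A T) := by
  induction s using Finset.induction_on with
  | empty =>
    intro T
    simp [jE]
  | @insert x s hx ih =>
    intro T
    set T' : Finset (Finset S) := T.image (fun ω => ω.erase x) with hT'
    have hET : jE A (insert x s) = A x ∩ jE A s := by
      simp [jE, Finset.set_biInter_insert]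
    have hDT' : jD A T' = ⋂ ω ∈ T, (jE A (ω.erase x))ᶜ := by
      simp only [jD, hT', Finset.set_biInter_finset_image]
    -- on the event `A x`, the event `jD A T` coincides with `jD A T'`
    have hswap : A x ∩ jD A T = A x ∩ jD A T' := by
      rw [hDT']
      ext u
      simp only [Set.mem_inter_iff, Set.mem_iInter, Set.mem_compl_iff]
      refine and_congr_right fun hu => ?_
      have : ∀ ω : Finset S, (u ∈ jE A ω ↔ u ∈ jE A (ω.erase x)) := by
        intro ω
        constructor
        · exact fun h => jE_mono (Finset.erase_subset _ _) h
        · intro h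
          refine jE_mem.2 fun y hy => ?_
          rcases eq_or_ne y x with rfl | hyx
          · exact hu
          · exact jE_mem.1 h y (Finset.mem_erase.2 ⟨hyx, hy⟩)
      simp only [jD_mem]
      constructor
      · intro h ω hω hmem; exact h ω hω ((this ω).2 hmem)
      · intro h ω hω hmem; exact h ω hω ((this ω).1 hmem)
    have hrearr : jE A (insert x s) ∩ jD A T = A x ∩ (jE A s ∩ jD A T') := by
      rw [hET, Set.inter_assoc, Set.inter_comm (jE A s) (jD A T), ← Set.inter_assoc, hswap,
        Set.inter_assoc, Set.inter_comm (jD A T') (jE A s)]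
    -- independence of `A x` from everything indexed away from `x`
    have hdisj : Disjoint ({x} : Set S) {y : S | y ≠ x} := by
      simp [Set.disjoint_left]
    have hAx : MeasurableSet[jGen A ({x} : Set S)] (A x) := jA_measIn rfl
    have hsub_s : (↑s : Set S) ⊆ {y : S | y ≠ x} := by
      intro y hy
      simp only [Set.mem_setOf_eq]
      rintro rfl
      exact hx (by exact_mod_cast hy)
    have hsub_T' : ∀ ω ∈ T', (↑ω : Set S) ⊆ {y : S | y ≠ x} := by
      intro ω hω
      rcases Finset.mem_image.1 hω with ⟨τ, _, rfl⟩
      intro y hy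
      simp only [Set.mem_setOf_eq]
      exact (Finset.mem_erase.1 (by exact_mod_cast hy)).1
    have hrest : MeasurableSet[jGen A {y : S | y ≠ x}] (jE A s ∩ jD A T') :=
      MeasurableSet.inter (jE_measIn hsub_s) (jD_measIn hsub_T')
    have hfac : P (jE A (insert x s) ∩ jD A T) = P (A x) * P (jE A s ∩ jD A T') := by
      rw [hrearr]; exact jIndep P hmeas hindep hdisj hAx hrest
    have hfac2 : P (jE A (insert x s)) = P (A x) * P (jE A s) := by
      rw [hET]
      exact jIndep P hmeas hindep hdisj hAx (jE_measIn hsub_s)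
    have hDsub : jD A T' ⊆ jD A T := by
      rw [hDT']
      intro u hu
      refine jD_mem.2 fun ω hω hmem => ?_
      have := Set.mem_iInter.1 hu ω
      have hu' : u ∉ jE A (ω.erase x) := by
        have h2 := Set.mem_iInter.1 (Set.mem_iInter.1 hu ω) hω
        exact h2
      exact hu' (jE_mono (Finset.erase_subset _ _) hmem)
    calc P (jE A (insert x s) ∩ jD A T) = P (A x) * P (jE A s ∩ jD A T') := hfac
      _ ≤ P (A x) * (P (jE A s) * P (jD A T')) := mul_le_mul_right (ih T') _
      _ = P (jE A (insert x s)) * P (jD A T') := by rw [hfac2, mul_assoc]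
      _ ≤ P (jE A (insert x s)) * P (jD A T) :=
          mul_le_mul_right (measure_mono hDsub) _


section Real

variable (P : Measure U) [IsProbabilityMeasure P]

lemma pr_mono {s t : Set U} (h : s ⊆ t) : (P s).toReal ≤ (P t).toReal :=
  ENNReal.toReal_mono (measure_ne_top P t) (measure_mono h)

lemma pr_le_one (s : Set U) : (P s).toReal ≤ 1 := by
  have := pr_mono P (Set.subset_univ s)
  simpa [measure_univ] using this

lemma pr_split (s : Set U) {t : Set U} (ht : MeasurableSet t) :
    (P (s ∩ t)).toReal + (P (s \ t)).toReal = (P s).toReal := by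
  rw [← ENNReal.toReal_add (measure_ne_top _ _) (measure_ne_top _ _),
    measure_inter_add_diff s ht]

lemma pr_compl {s : Set U} (hs : MeasurableSet s) :
    (P sᶜ).toReal = 1 - (P s).toReal := by
  rw [prob_compl_eq_one_sub hs,
    ENNReal.toReal_sub_of_le prob_le_one ENNReal.one_ne_top, ENNReal.toReal_one]

end Real

/-- The key single-step estimate in Janson's inequality. -/
lemma jStep (P : Measure U) [IsProbabilityMeasure P]
    (hmeas : ∀ x, MeasurableSet (A x)) (hindep : iIndepSet A P)
    (ω : Finset S) (T : Finset (Finset S)) (hω : (P (jE A ω)).toReal ≤ 1 / 2) :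
    (P ((jE A ω)ᶜ ∩ jD A T)).toReal ≤
      (P ((jE A ω)ᶜ)).toReal *
        (1 + 2 * ∑ ω' ∈ T.filter fun ω' => (ω ∩ ω').Nonempty,
          (P (jE A ω ∩ jE A ω')).toReal) * (P (jD A T)).toReal := by
  classical
  set q : ℝ := (P (jE A ω)).toReal with hq
  set Sg : ℝ := ∑ ω' ∈ T.filter fun ω' => (ω ∩ ω').Nonempty,
    (P (jE A ω ∩ jE A ω')).toReal with hSg
  set Dp : Finset (Finset S) := T.filter fun ω' => (ω ∩ ω').Nonempty with hDpdef
  set N : Finset (Finset S) := T.filter fun ω' => ¬(ω ∩ ω').Nonempty with hNdef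
  have hTun : Dp ∪ N = T := Finset.filter_union_filter_not_eq _ T
  have hDT : jD A T = jD A Dp ∩ jD A N := by rw [← hTun, jD_union]
  have hNT : N ⊆ T := Finset.filter_subset _ _
  have hDsubN : jD A T ⊆ jD A N := jD_anti hNT
  -- independence of `jE A ω` and `jD A N`
  have hindepN : P (jE A ω ∩ jD A N) = P (jE A ω) * P (jD A N) := by
    refine jIndep P hmeas hindep (I := (↑ω : Set S)) (J := (↑(N.biUnion id) : Set S)) ?_
      (jE_measIn subset_rfl) (jD_measIn ?_)
    · rw [Finset.disjoint_coe, Finset.disjoint_left]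
      intro x hxω hxN
      rcases Finset.mem_biUnion.1 hxN with ⟨ω', hω', hxω'⟩
      have := (Finset.mem_filter.1 hω').2
      exact this ⟨x, Finset.mem_inter.2 ⟨hxω, hxω'⟩⟩
    · intro ω' hω' x hx
      exact_mod_cast Finset.mem_biUnion.2 ⟨ω', hω', hx⟩
  set X : Set U := jE A ω ∩ jD A N with hX
  have hXT : X ∩ jD A T = jE A ω ∩ jD A T := by
    rw [hX, Set.inter_assoc, Set.inter_eq_self_of_subset_right hDsubN]
  have hsplit : (P (X ∩ jD A T)).toReal + (P (X \ jD A T)).toReal = (P X).toReal :=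
    pr_split P X (jD_meas hmeas T)
  have hdiff_sub : X \ jD A T ⊆ ⋃ ω' ∈ Dp, (jE A (ω ∪ ω') ∩ jD A N) := by
    rintro u ⟨⟨hu1, hu2⟩, hu3⟩
    have hnD : u ∉ jD A Dp := fun hcon => hu3 (hDT ▸ ⟨hcon, hu2⟩)
    obtain ⟨ω', hω', hmem⟩ : ∃ ω' ∈ Dp, u ∈ jE A ω' := by
      by_contra hcon
      push_neg at hcon
      exact hnD (jD_mem.2 hcon)
    refine Set.mem_biUnion hω' ?_
    rw [jE_union]
    exact ⟨⟨hu1, hmem⟩, hu2⟩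
  have hle1 : P (X \ jD A T) ≤ ∑ ω' ∈ Dp, P (jE A ω ∩ jE A ω') * P (jD A N) := by
    calc P (X \ jD A T) ≤ P (⋃ ω' ∈ Dp, (jE A (ω ∪ ω') ∩ jD A N)) := measure_mono hdiff_sub
      _ ≤ ∑ ω' ∈ Dp, P (jE A (ω ∪ ω') ∩ jD A N) := measure_biUnion_finset_le _ _
      _ ≤ ∑ ω' ∈ Dp, P (jE A ω ∩ jE A ω') * P (jD A N) := by
          refine Finset.sum_le_sum fun ω' _ => ?_
          rw [← jE_union]
          exact jHarris P hmeas hindep _ N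
  have hle1R : (P (X \ jD A T)).toReal ≤ Sg * (P (jD A N)).toReal := by
    have hne : (∑ ω' ∈ Dp, P (jE A ω ∩ jE A ω') * P (jD A N)) ≠ ⊤ :=
      (ENNReal.sum_lt_top.2 fun ω' _ =>
        ENNReal.mul_lt_top (measure_lt_top _ _) (measure_lt_top _ _)).ne
    have := ENNReal.toReal_mono hne hle1
    calc (P (X \ jD A T)).toReal
        ≤ (∑ ω' ∈ Dp, P (jE A ω ∩ jE A ω') * P (jD A N)).toReal := this
      _ = Sg * (P (jD A N)).toReal := by
          rw [ENNReal.toReal_sum fun ω' _ =>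
            (ENNReal.mul_lt_top (measure_lt_top _ _) (measure_lt_top _ _)).ne, hSg,
            Finset.sum_mul]
          exact Finset.sum_congr rfl fun ω' _ => ENNReal.toReal_mul
  have hXR : (P X).toReal = q * (P (jD A N)).toReal := by
    rw [hX, hindepN, ENNReal.toReal_mul]
  have key : (q - Sg) * (P (jD A N)).toReal ≤ (P (jE A ω ∩ jD A T)).toReal := by
    have := hsplit
    rw [hXT, hXR] at this
    nlinarith [hle1R]
  -- basic positivity facts
  have hq0 : 0 ≤ q := ENNReal.toReal_nonneg
  have hSg0 : 0 ≤ Sg := Finset.sum_nonneg fun _ _ => ENNReal.toReal_nonneg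
  set pT : ℝ := (P (jD A T)).toReal with hpT
  set pN : ℝ := (P (jD A N)).toReal with hpN
  have hpT0 : 0 ≤ pT := ENNReal.toReal_nonneg
  have hpTN : pT ≤ pN := pr_mono P hDsubN
  have hcompl : (P ((jE A ω)ᶜ)).toReal = 1 - q := pr_compl P (jE_meas hmeas ω)
  have hsplit2 : (P (jE A ω ∩ jD A T)).toReal + (P ((jE A ω)ᶜ ∩ jD A T)).toReal = pT := by
    have := pr_split P (jD A T) (jE_meas hmeas ω)
    rwa [Set.inter_comm (jD A T) (jE A ω), Set.diff_eq,
      Set.inter_comm (jD A T) ((jE A ω)ᶜ)] at this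
  rw [hcompl]
  rcases le_or_gt Sg q with hcase | hcase
  · have h1 : (q - Sg) * pT ≤ (q - Sg) * pN :=
      mul_le_mul_of_nonneg_left hpTN (by linarith)
    have h2 : (q - Sg) * pT ≤ (P (jE A ω ∩ jD A T)).toReal := le_trans h1 key
    nlinarith [mul_nonneg (mul_nonneg hSg0 (by linarith : (0:ℝ) ≤ 1 - 2 * q)) hpT0]
  · have h3 : (P ((jE A ω)ᶜ ∩ jD A T)).toReal ≤ pT := pr_mono P Set.inter_subset_right
    have hge1 : 1 ≤ (1 - q) * (1 + 2 * Sg) := by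
      nlinarith [mul_nonneg (sub_nonneg.2 hcase.le) (by linarith : (0:ℝ) ≤ 1 - q),
        mul_nonneg hq0 (by linarith : (0:ℝ) ≤ 1 - 2 * q)]
    nlinarith [mul_le_mul_of_nonneg_right hge1 hpT0]


lemma pr_split_compl (P : Measure U) [IsProbabilityMeasure P] (s : Set U) {t : Set U}
    (ht : MeasurableSet t) :
    (P (t ∩ s)).toReal + (P (tᶜ ∩ s)).toReal = (P s).toReal := by
  have := pr_split P s ht
  rwa [Set.inter_comm s t, Set.diff_eq, Set.inter_comm s tᶜ] at this

/-- Counting pairs: inserting a new `ω` adds at least the `2 Σ` new dependent pairs. -/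
lemma jPairs (P : Measure U) {ω : Finset S} {T : Finset (Finset S)} (hω : ω ∉ T) :
    (∑ p ∈ (T ×ˢ T).filter (fun p => p.1 ≠ p.2 ∧ (p.1 ∩ p.2).Nonempty),
      (P (jE A p.1 ∩ jE A p.2)).toReal) +
    2 * ∑ ω' ∈ T.filter (fun ω' => (ω ∩ ω').Nonempty), (P (jE A ω ∩ jE A ω')).toReal ≤
    ∑ p ∈ ((insert ω T) ×ˢ (insert ω T)).filter (fun p => p.1 ≠ p.2 ∧ (p.1 ∩ p.2).Nonempty),
      (P (jE A p.1 ∩ jE A p.2)).toReal := by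
  classical
  set f : Finset S × Finset S → ℝ := fun p => (P (jE A p.1 ∩ jE A p.2)).toReal with hf
  set F : Finset (Finset S) := T.filter (fun ω' => (ω ∩ ω').Nonempty) with hF
  set S1 : Finset (Finset S × Finset S) := F.image fun ω' => (ω, ω') with hS1
  set S2 : Finset (Finset S × Finset S) := F.image fun ω' => (ω', ω) with hS2
  set S0 : Finset (Finset S × Finset S) :=
    (T ×ˢ T).filter (fun p => p.1 ≠ p.2 ∧ (p.1 ∩ p.2).Nonempty) with hS0
  have hωF : ∀ ω' ∈ F, ω' ≠ ω := by
    intro ω' hω' h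
    exact hω (h ▸ (Finset.mem_filter.1 hω').1)
  have hsum1 : ∑ p ∈ S1, f p = ∑ ω' ∈ F, f (ω, ω') :=
    Finset.sum_image fun a _ b _ h => by simpa using h
  have hsum2 : ∑ p ∈ S2, f p = ∑ ω' ∈ F, f (ω', ω) :=
    Finset.sum_image fun a _ b _ h => by simpa using h
  have hswap : ∀ ω', f (ω', ω) = f (ω, ω') := by
    intro ω'
    simp only [hf]
    rw [Set.inter_comm]
  have hd01 : Disjoint S0 S1 := by
    rw [Finset.disjoint_left]
    rintro p hp0 hp1
    rcases Finset.mem_image.1 hp1 with ⟨ω', _, rfl⟩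
    exact hω (Finset.mem_product.1 (Finset.mem_filter.1 hp0).1).1
  have hd02 : Disjoint S0 S2 := by
    rw [Finset.disjoint_left]
    rintro p hp0 hp2
    rcases Finset.mem_image.1 hp2 with ⟨ω', _, rfl⟩
    exact hω (Finset.mem_product.1 (Finset.mem_filter.1 hp0).1).2
  have hd12 : Disjoint S1 S2 := by
    rw [Finset.disjoint_left]
    rintro p hp1 hp2
    rcases Finset.mem_image.1 hp1 with ⟨a, ha, rfl⟩
    rcases Finset.mem_image.1 hp2 with ⟨b, hb, hq⟩
    have : a = ω := (Prod.mk.inj hq.symm).2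
    exact hωF a ha this
  have hsub : (S0 ∪ S1) ∪ S2 ⊆
      ((insert ω T) ×ˢ (insert ω T)).filter (fun p => p.1 ≠ p.2 ∧ (p.1 ∩ p.2).Nonempty) := by
    intro p hp
    rcases Finset.mem_union.1 hp with hp' | hp2
    · rcases Finset.mem_union.1 hp' with hp0 | hp1
      · rcases Finset.mem_filter.1 hp0 with ⟨hpp, hpred⟩
        rcases Finset.mem_product.1 hpp with ⟨h1, h2⟩
        exact Finset.mem_filter.2 ⟨Finset.mem_product.2
          ⟨Finset.mem_insert_of_mem h1, Finset.mem_insert_of_mem h2⟩, hpred⟩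
      · rcases Finset.mem_image.1 hp1 with ⟨ω', hω', rfl⟩
        rcases Finset.mem_filter.1 hω' with ⟨hT', hne⟩
        exact Finset.mem_filter.2 ⟨Finset.mem_product.2
          ⟨Finset.mem_insert_self _ _, Finset.mem_insert_of_mem hT'⟩,
          ⟨fun h => hωF ω' hω' h.symm, hne⟩⟩
    · rcases Finset.mem_image.1 hp2 with ⟨ω', hω', rfl⟩
      rcases Finset.mem_filter.1 hω' with ⟨hT', hne⟩
      refine Finset.mem_filter.2 ⟨Finset.mem_product.2
        ⟨Finset.mem_insert_of_mem hT', Finset.mem_insert_self _ _⟩,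
        ⟨hωF ω' hω', ?_⟩⟩
      rcases hne with ⟨x, hx⟩
      rcases Finset.mem_inter.1 hx with ⟨h1, h2⟩
      exact ⟨x, Finset.mem_inter.2 ⟨h2, h1⟩⟩
  have hS2eq : ∑ p ∈ S2, f p = ∑ ω' ∈ F, f (ω, ω') := by
    rw [hsum2]
    exact Finset.sum_congr rfl fun ω' _ => hswap ω'
  have heq : (∑ p ∈ S0, f p) + 2 * (∑ ω' ∈ F, f (ω, ω')) = ∑ p ∈ (S0 ∪ S1) ∪ S2, f p := by
    rw [Finset.sum_union (Finset.disjoint_union_left.2 ⟨hd02, hd12⟩), Finset.sum_union hd01,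
      hsum1, hS2eq]
    ring
  have hfinal : ∑ p ∈ (S0 ∪ S1) ∪ S2, f p ≤
      ∑ p ∈ ((insert ω T) ×ˢ (insert ω T)).filter (fun p => p.1 ≠ p.2 ∧ (p.1 ∩ p.2).Nonempty),
        f p :=
    Finset.sum_le_sum_of_subset_of_nonneg hsub fun _ _ _ => ENNReal.toReal_nonneg
  calc (∑ p ∈ S0, f p) + 2 * (∑ ω' ∈ F, f (ω, ω'))
      = ∑ p ∈ (S0 ∪ S1) ∪ S2, f p := heq
    _ ≤ _ := hfinal


/-- Janson's inequality, both bounds, phrased with `jE`/`jD`. -/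
lemma jMain (P : Measure U) [IsProbabilityMeasure P]
    (hmeas : ∀ x, MeasurableSet (A x)) (hindep : iIndepSet A P)
    (Ω : Finset (Finset S)) (hhalf : ∀ ω ∈ Ω, (P (jE A ω)).toReal ≤ 1 / 2) :
    (∏ ω ∈ Ω, (P ((jE A ω)ᶜ)).toReal) ≤ (P (jD A Ω)).toReal ∧
    (P (jD A Ω)).toReal ≤ (∏ ω ∈ Ω, (P ((jE A ω)ᶜ)).toReal) *
      Real.exp (∑ p ∈ (Ω ×ˢ Ω).filter (fun p => p.1 ≠ p.2 ∧ (p.1 ∩ p.2).Nonempty),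
        (P (jE A p.1 ∩ jE A p.2)).toReal) := by
  classical
  induction Ω using Finset.induction_on with
  | empty => simp [jD]
  | @insert ω T hωT ih =>
    obtain ⟨ih1, ih2⟩ := ih fun ω' h => hhalf ω' (Finset.mem_insert_of_mem h)
    have hhω : (P (jE A ω)).toReal ≤ 1 / 2 := hhalf ω (Finset.mem_insert_self ω T)
    have hDins : jD A (insert ω T) = (jE A ω)ᶜ ∩ jD A T := by
      simp [jD, Finset.set_biInter_insert]
    have hsplit2 : (P (jE A ω ∩ jD A T)).toReal + (P ((jE A ω)ᶜ ∩ jD A T)).toReal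
        = (P (jD A T)).toReal := pr_split_compl P (jD A T) (jE_meas hmeas ω)
    have hcompl : (P ((jE A ω)ᶜ)).toReal = 1 - (P (jE A ω)).toReal :=
      pr_compl P (jE_meas hmeas ω)
    have hq1 : (P (jE A ω)).toReal ≤ 1 := pr_le_one P _
    have hq0 : (0:ℝ) ≤ (P (jE A ω)).toReal := ENNReal.toReal_nonneg
    have hprodT0 : (0:ℝ) ≤ ∏ ω' ∈ T, (P ((jE A ω')ᶜ)).toReal :=
      Finset.prod_nonneg fun _ _ => ENNReal.toReal_nonneg
    constructor
    · -- lower bound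
      rw [Finset.prod_insert hωT, hDins]
      have hh : (P (jE A ω ∩ jD A T)).toReal ≤ (P (jE A ω)).toReal * (P (jD A T)).toReal := by
        have h := jHarris P hmeas hindep ω T
        have h2 := ENNReal.toReal_mono
          (ENNReal.mul_lt_top (measure_lt_top _ _) (measure_lt_top _ _)).ne h
        rwa [ENNReal.toReal_mul] at h2
      have h1 : (P ((jE A ω)ᶜ)).toReal * (∏ ω' ∈ T, (P ((jE A ω')ᶜ)).toReal)
          ≤ (P ((jE A ω)ᶜ)).toReal * (P (jD A T)).toReal :=
        mul_le_mul_of_nonneg_left ih1 ENNReal.toReal_nonneg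
      rw [hcompl] at h1 ⊢
      nlinarith [hsplit2, hh]
    · -- upper bound
      rw [Finset.prod_insert hωT, hDins]
      set Sg : ℝ := ∑ ω' ∈ T.filter (fun ω' => (ω ∩ ω').Nonempty),
        (P (jE A ω ∩ jE A ω')).toReal with hSg
      have hSg0 : 0 ≤ Sg := Finset.sum_nonneg fun _ _ => ENNReal.toReal_nonneg
      set c : ℝ := (P ((jE A ω)ᶜ)).toReal with hc
      have hc0 : 0 ≤ c := ENNReal.toReal_nonneg
      set psT : ℝ := ∑ p ∈ (T ×ˢ T).filter (fun p => p.1 ≠ p.2 ∧ (p.1 ∩ p.2).Nonempty),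
        (P (jE A p.1 ∩ jE A p.2)).toReal with hpsT
      have hpairs := jPairs (A := A) P hωT
      rw [← hSg, ← hpsT] at hpairs
      have hstep := jStep P hmeas hindep ω T hhω
      rw [← hSg, ← hc] at hstep
      have h2 : c * (1 + 2 * Sg) * (P (jD A T)).toReal ≤
          c * (1 + 2 * Sg) * ((∏ ω' ∈ T, (P ((jE A ω')ᶜ)).toReal) * Real.exp psT) := by
        exact mul_le_mul_of_nonneg_left ih2 (mul_nonneg hc0 (by linarith))
      have h3 : c * (1 + 2 * Sg) * ((∏ ω' ∈ T, (P ((jE A ω')ᶜ)).toReal) * Real.exp psT) ≤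
          c * Real.exp (2 * Sg) * ((∏ ω' ∈ T, (P ((jE A ω')ᶜ)).toReal) * Real.exp psT) := by
        have hexp : 1 + 2 * Sg ≤ Real.exp (2 * Sg) := by
          have := Real.add_one_le_exp (2 * Sg)
          linarith
        exact mul_le_mul_of_nonneg_right (mul_le_mul_of_nonneg_left hexp hc0)
          (mul_nonneg hprodT0 (Real.exp_pos _).le)
      have h4 : c * Real.exp (2 * Sg) * ((∏ ω' ∈ T, (P ((jE A ω')ᶜ)).toReal) * Real.exp psT)
          = c * (∏ ω' ∈ T, (P ((jE A ω')ᶜ)).toReal) * Real.exp (psT + 2 * Sg) := by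
        rw [Real.exp_add]
        ring
      have h5 : c * (∏ ω' ∈ T, (P ((jE A ω')ᶜ)).toReal) * Real.exp (psT + 2 * Sg) ≤
          c * (∏ ω' ∈ T, (P ((jE A ω')ᶜ)).toReal) *
            Real.exp (∑ p ∈ ((insert ω T) ×ˢ (insert ω T)).filter
              (fun p => p.1 ≠ p.2 ∧ (p.1 ∩ p.2).Nonempty),
              (P (jE A p.1 ∩ jE A p.2)).toReal) := by
        exact mul_le_mul_of_nonneg_left (Real.exp_le_exp.2 hpairs)
          (mul_nonneg hc0 hprodT0)
      calc (P ((jE A ω)ᶜ ∩ jD A T)).toReal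
          ≤ c * (1 + 2 * Sg) * (P (jD A T)).toReal := hstep
        _ ≤ c * (1 + 2 * Sg) * ((∏ ω' ∈ T, (P ((jE A ω')ᶜ)).toReal) * Real.exp psT) := h2
        _ ≤ c * Real.exp (2 * Sg) * ((∏ ω' ∈ T, (P ((jE A ω')ᶜ)).toReal) * Real.exp psT) := h3
        _ = c * (∏ ω' ∈ T, (P ((jE A ω')ᶜ)).toReal) * Real.exp (psT + 2 * Sg) := h4
        _ ≤ _ := h5

end JansonAux

open JansonAux

/-- Janson's correlation inequality: given a family `(A x)_{x ∈ S}` of independent events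
and a finite collection `Ω` of finite subsets of `S`, with `E ω = ⋂_{x ∈ ω} A x` satisfying
`P(E ω) ≤ 1/2` for all `ω ∈ Ω`, one has
`∏_{ω ∈ Ω} P(E ωᶜ) ≤ P(⋂_{ω ∈ Ω} E ωᶜ) ≤ ∏_{ω ∈ Ω} P(E ωᶜ) · exp(∑ P(E ω ∩ E ω'))`,
where the sum runs over ordered pairs `(ω, ω')` of distinct members of `Ω` with
`ω ∩ ω' ≠ ∅` (this equals twice the sum over unordered such pairs). -/
theorem janson_correlation_inequality {U : Type*} [MeasurableSpace U]
    (P : Measure U) [IsProbabilityMeasure P]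
    {S : Type*} [DecidableEq S] (A : S → Set U) (hmeas : ∀ x, MeasurableSet (A x))
    (hindep : iIndepSet A P)
    (Ω : Finset (Finset S))
    (hhalf : ∀ ω ∈ Ω, (P (⋂ x ∈ ω, A x)).toReal ≤ 1 / 2) :
    (∏ ω ∈ Ω, (P ((⋂ x ∈ ω, A x)ᶜ)).toReal) ≤ (P (⋂ ω ∈ Ω, (⋂ x ∈ ω, A x)ᶜ)).toReal ∧
    (P (⋂ ω ∈ Ω, (⋂ x ∈ ω, A x)ᶜ)).toReal ≤
      (∏ ω ∈ Ω, (P ((⋂ x ∈ ω, A x)ᶜ)).toReal) *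
        Real.exp (∑ p ∈ (Ω ×ˢ Ω).filter (fun p => p.1 ≠ p.2 ∧ (p.1 ∩ p.2).Nonempty),
          (P ((⋂ x ∈ p.1, A x) ∩ ⋂ x ∈ p.2, A x)).toReal) := by
  exact jMain P hmeas hindep Ω hhalf
end

section
/- Fix an integer s ≥ 2, an integer t with 1 ≤ t ≤ s−1, and positive integers a_1, …, a_t. Then there is a constant C (depending on s, t, a_1, …, a_t) such that for every integer z ≥ 1, ∑ (x_1 ⋯ x_t)^{−1+1/s} ≤ C z^{−1+t/s}, where the sum runs over all t-tuples of positive integers (x_1, …, x_t) with a_1 x_1 + ⋯ + a_t x_t = z. -/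
open Filter Finset

/-- Bernoulli-type key inequality: `p x^{p-1} + (x-1)^p ≤ x^p` for `0 < p ≤ 1`, `1 ≤ x`. -/
lemma key_ineq {p x : ℝ} (hp0 : 0 < p) (hp1 : p ≤ 1) (hx : 1 ≤ x) :
    p * x ^ (p - 1) + (x - 1) ^ p ≤ x ^ p := by
  have hx0 : (0:ℝ) < x := lt_of_lt_of_le one_pos hx
  have h1 : (x - 1) ^ p = x ^ p * (1 + (-1 / x)) ^ p := by
    rw [← Real.mul_rpow hx0.le (by
      have : 1 / x ≤ 1 := by
        rw [div_le_one hx0]; exact hx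
      have : -1/x = -(1/x) := by ring
      rw [this]; linarith)]
    congr 1
    field_simp
    ring
  have hbern : (1 + (-1 / x)) ^ p ≤ 1 + p * (-1 / x) := by
    apply rpow_one_add_le_one_add_mul_self _ hp0.le hp1
    have : 1 / x ≤ 1 := by rw [div_le_one hx0]; exact hx
    have h : -1/x = -(1/x) := by ring
    rw [h]; linarith
  have h2 : x ^ p * (1 + p * (-1 / x)) = x ^ p - p * x ^ (p - 1) := by
    have hxp : x ^ (p - 1) = x ^ p / x := by
      rw [Real.rpow_sub hx0, Real.rpow_one]
    rw [hxp]; field_simp; ring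
  have h3 : (x - 1) ^ p ≤ x ^ p - p * x ^ (p - 1) := by
    rw [h1, ← h2]
    exact mul_le_mul_of_nonneg_left hbern (Real.rpow_nonneg hx0.le p)
  linarith

/-- Sum comparison: `∑_{x=1}^z x^{p-1} ≤ z^p / p` for `0 < p ≤ 1`. -/
lemma sum_rpow_le {p : ℝ} (hp0 : 0 < p) (hp1 : p ≤ 1) (z : ℕ) :
    ∑ x ∈ Finset.Icc 1 z, (x : ℝ) ^ (p - 1) ≤ (z : ℝ) ^ p / p := by
  induction z with
  | zero => simp [Real.zero_rpow (ne_of_gt hp0)]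
  | succ n ih =>
    rw [Finset.sum_Icc_succ_top (Nat.succ_le_succ (Nat.zero_le n))]
    have hk := key_ineq hp0 hp1 (x := (n:ℝ) + 1) (le_add_of_nonneg_left (Nat.cast_nonneg n))
    have hcast : ((n + 1 : ℕ) : ℝ) = (n : ℝ) + 1 := by push_cast; ring
    have hsub : ((n:ℝ) + 1) - 1 = (n:ℝ) := by ring
    rw [hsub] at hk
    rw [hcast]
    have : ((n:ℝ) + 1) ^ (p - 1) ≤ (((n:ℝ) + 1) ^ p - (n:ℝ) ^ p) / p := by
      rw [le_div_iff₀ hp0]; linarith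
    calc (∑ x ∈ Finset.Icc 1 n, (x : ℝ) ^ (p - 1)) + ((n:ℝ) + 1) ^ (p - 1)
        ≤ (n : ℝ) ^ p / p + (((n:ℝ) + 1) ^ p - (n:ℝ) ^ p) / p := add_le_add ih this
      _ = ((n:ℝ) + 1) ^ p / p := by ring

/-- Lemma (technical, part i): for `1 ≤ t ≤ s − 1` and positive integers `a 1, …, a t`,
`∑_{a·x = z, x positive} (x 1 ⋯ x t)^{−1+1/s} ≤ C z^{−1+t/s}` for all `z ≥ 1`. -/
theorem sum_over_linear_level_set (s t : ℕ) (hs : 2 ≤ s) (ht1 : 1 ≤ t) (hts : t ≤ s - 1)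
    (a : Fin t → ℕ) (ha : ∀ k, 1 ≤ a k) :
    ∃ C : ℝ, 0 < C ∧ ∀ z : ℕ, 1 ≤ z →
      ∑ x ∈ (Fintype.piFinset fun _ : Fin t => Finset.Icc 1 z).filter
            (fun x => ∑ k, a k * x k = z),
          (∏ k, (x k : ℝ)) ^ (-1 + 1 / (s : ℝ))
        ≤ C * (z : ℝ) ^ (-1 + (t : ℝ) / (s : ℝ)) := by
  have hs' : (2:ℝ) ≤ (s:ℝ) := by exact_mod_cast hs
  set p : ℝ := 1 / (s:ℝ) with hp_def
  have hp0 : 0 < p := by rw [hp_def]; positivity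
  have hp1 : p ≤ 1 := by rw [hp_def, div_le_one (by linarith)]; linarith
  have htn : Nonempty (Fin t) := ⟨⟨0, ht1⟩⟩
  have ht1' : (1:ℝ) ≤ (t:ℝ) := by exact_mod_cast ht1
  set C : ℝ := (∑ j : Fin t, ((t:ℝ) * (a j : ℝ)) ^ (1 - p)) / p ^ (t - 1) with hC
  have hApos : ∀ j : Fin t, (0:ℝ) < (t:ℝ) * (a j : ℝ) := by
    intro j
    have h2 : (1:ℝ) ≤ (a j : ℝ) := by exact_mod_cast ha j
    nlinarith
  refine ⟨C, ?_, ?_⟩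
  · apply div_pos
    · exact Finset.sum_pos (fun j _ => Real.rpow_pos_of_pos (hApos j) _) Finset.univ_nonempty
    · positivity
  intro z hz
  have hz0 : (0:ℝ) < (z:ℝ) := by exact_mod_cast hz
  have hexp1 : -1 + 1/(s:ℝ) = p - 1 := by rw [hp_def]; ring
  rw [hexp1]
  set g : (Fin t → ℕ) → ℝ := fun x => ∏ k, (x k : ℝ) ^ (p - 1) with hg
  have hgnn : ∀ x, 0 ≤ g x := fun x =>
    Finset.prod_nonneg fun k _ => Real.rpow_nonneg (Nat.cast_nonneg _) _
  set F := (Fintype.piFinset fun _ : Fin t => Finset.Icc 1 z).filter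
      (fun x => ∑ k, a k * x k = z) with hF
  -- covering step
  have cover : ∀ x ∈ F, g x ≤ ∑ j : Fin t, if z ≤ t * (a j * x j) then g x else 0 := by
    intro x hx
    rw [hF, Finset.mem_filter] at hx
    obtain ⟨j₀, -, hj₀⟩ := Finset.exists_max_image Finset.univ (fun k => a k * x k)
      Finset.univ_nonempty
    have hbig : z ≤ t * (a j₀ * x j₀) := by
      calc z = ∑ k, a k * x k := hx.2.symm
        _ ≤ Finset.univ.card • (a j₀ * x j₀) :=
            Finset.sum_le_card_nsmul _ _ _ (fun k _ => hj₀ k (Finset.mem_univ k))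
        _ = t * (a j₀ * x j₀) := by simp [Finset.card_univ]
    have hle := Finset.single_le_sum
      (f := fun j : Fin t => if z ≤ t * (a j * x j) then g x else 0)
      (fun j _ => by by_cases h : z ≤ t * (a j * x j) <;> simp [h, hgnn x])
      (Finset.mem_univ j₀)
    simpa [if_pos hbig] using hle
  -- per-direction bound
  have stepj : ∀ j : Fin t, j ∈ Finset.univ →
      ∑ x ∈ F.filter (fun x => z ≤ t * (a j * x j)), g x
        ≤ ((t:ℝ)*(a j : ℝ))^(1-p) * ((z:ℝ)^(p-1) * (((z:ℝ)^p/p)^(t-1))) := by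
    intro j _
    set c : ℝ := ((t:ℝ)*(a j : ℝ))^(1-p) * (z:ℝ)^(p-1) with hc
    have hc0 : 0 ≤ c := mul_nonneg (Real.rpow_nonneg (hApos j).le _) (Real.rpow_nonneg hz0.le _)
    set Fj := F.filter (fun x => z ≤ t * (a j * x j)) with hFj
    set e : (Fin t → ℕ) → (Fin t → ℕ) := fun x => Function.update x j 1 with he
    set S : Fin t → Finset ℕ := Function.update (fun _ : Fin t => Finset.Icc 1 z) j {1} with hS
    -- pointwise bound
    have hpt : ∀ x ∈ Fj, g x ≤ c * g (e x) := by
      intro x hx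
      rw [hFj, Finset.mem_filter, hF, Finset.mem_filter] at hx
      obtain ⟨⟨hxP, hxsum⟩, hxbig⟩ := hx
      have hle : (z:ℝ)/((t:ℝ)*(a j : ℝ)) ≤ (x j : ℝ) := by
        rw [div_le_iff₀ (hApos j)]
        calc (z:ℝ) ≤ (t:ℝ) * ((a j : ℝ) * (x j : ℝ)) := by exact_mod_cast hxbig
          _ = (x j : ℝ) * ((t:ℝ) * (a j : ℝ)) := by ring
      have h1 : ((x j : ℕ) : ℝ)^(p-1) ≤ ((z:ℝ)/((t:ℝ)*(a j : ℝ)))^(p-1) :=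
        Real.rpow_le_rpow_of_nonpos (div_pos hz0 (hApos j)) hle (by linarith)
      have h2 : ((z:ℝ)/((t:ℝ)*(a j : ℝ)))^(p-1) = c := by
        rw [hc, Real.div_rpow hz0.le (hApos j).le, div_eq_mul_inv,
          ← Real.rpow_neg (hApos j).le, neg_sub, mul_comm]
      have hprod : g x = (x j : ℝ)^(p-1) * ∏ k ∈ Finset.univ.erase j, (x k : ℝ)^(p-1) :=
        (Finset.mul_prod_erase Finset.univ _ (Finset.mem_univ j)).symm
      have hprod2 : g (e x) = ∏ k ∈ Finset.univ.erase j, (x k : ℝ)^(p-1) := by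
        simp only [hg]
        rw [← Finset.mul_prod_erase Finset.univ (fun k => ((e x) k : ℝ)^(p-1))
          (Finset.mem_univ j)]
        have hej : e x j = 1 := Function.update_self j 1 x
        rw [hej, Nat.cast_one, Real.one_rpow, one_mul]
        exact Finset.prod_congr rfl fun k hk => by
          simp only [he, Function.update_of_ne (Finset.ne_of_mem_erase hk)]
      have hR : 0 ≤ ∏ k ∈ Finset.univ.erase j, (x k : ℝ)^(p-1) :=
        Finset.prod_nonneg fun k _ => Real.rpow_nonneg (Nat.cast_nonneg _) _
      rw [hprod, hprod2]
      exact mul_le_mul_of_nonneg_right (le_of_le_of_eq h1 h2) hR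
    have hsum1 : ∑ x ∈ Fj, g x ≤ c * ∑ x ∈ Fj, g (e x) := by
      rw [Finset.mul_sum]
      exact Finset.sum_le_sum hpt
    -- injectivity
    have hinj : ∀ x ∈ Fj, ∀ x' ∈ Fj, e x = e x' → x = x' := by
      intro x hx x' hx' hxx
      rw [hFj, Finset.mem_filter, hF, Finset.mem_filter] at hx hx'
      have hxk : ∀ k, k ≠ j → x k = x' k := by
        intro k hk
        have h := congrFun hxx k
        rw [he] at h
        simpa [Function.update_of_ne hk] using h
      have herase : ∑ k ∈ Finset.univ.erase j, a k * x k
          = ∑ k ∈ Finset.univ.erase j, a k * x' k :=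
        Finset.sum_congr rfl fun k hk => by rw [hxk k (Finset.ne_of_mem_erase hk)]
      have hxsplit := Finset.add_sum_erase Finset.univ (fun k => a k * x k) (Finset.mem_univ j)
      have hx'split := Finset.add_sum_erase Finset.univ (fun k => a k * x' k) (Finset.mem_univ j)
      have hadd : a j * x j + ∑ k ∈ Finset.univ.erase j, a k * x k
          = a j * x' j + ∑ k ∈ Finset.univ.erase j, a k * x' k := by
        rw [hxsplit, hx'split, hx.1.2, hx'.1.2]
      have hj : a j * x j = a j * x' j := by
        rw [herase] at hadd
        exact Nat.add_right_cancel hadd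
      have hjj : x j = x' j := Nat.eq_of_mul_eq_mul_left (ha j) hj
      funext k
      by_cases hkj : k = j
      · rw [hkj]; exact hjj
      · exact hxk k hkj
    have hsum2 : ∑ x ∈ Fj, g (e x) = ∑ y ∈ Finset.image e Fj, g y :=
      (Finset.sum_image hinj).symm
    have himg : Finset.image e Fj ⊆ Fintype.piFinset S := by
      intro y hy
      obtain ⟨x, hx, rfl⟩ := Finset.mem_image.mp hy
      rw [hFj, Finset.mem_filter, hF, Finset.mem_filter] at hx
      rw [Fintype.mem_piFinset]
      intro k
      by_cases hkj : k = j
      · rw [hkj, he, hS]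
        simp
      · rw [he, hS]
        simp only [Function.update_of_ne hkj]
        exact (Fintype.mem_piFinset.mp hx.1.1) k
    have hsum3 : ∑ y ∈ Finset.image e Fj, g y ≤ ∑ y ∈ Fintype.piFinset S, g y :=
      Finset.sum_le_sum_of_subset_of_nonneg himg (fun y _ _ => hgnn y)
    have hsum4 : ∑ y ∈ Fintype.piFinset S, g y = ∏ k, ∑ v ∈ S k, (v : ℝ)^(p-1) :=
      (Finset.prod_univ_sum S fun k v => (v : ℝ)^(p-1)).symm
    have hsum5 : ∏ k, ∑ v ∈ S k, (v : ℝ)^(p-1) ≤ ((z:ℝ)^p/p)^(t-1) := by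
      rw [← Finset.mul_prod_erase Finset.univ _ (Finset.mem_univ j)]
      have hSj : S j = {1} := by rw [hS]; exact Function.update_self j {1} _
      rw [hSj]
      have h1 : ∑ v ∈ ({1} : Finset ℕ), (v : ℝ)^(p-1) = 1 := by simp
      rw [h1, one_mul]
      calc ∏ k ∈ Finset.univ.erase j, ∑ v ∈ S k, (v : ℝ)^(p-1)
          ≤ ∏ _k ∈ Finset.univ.erase j, ((z:ℝ)^p/p) := by
            apply Finset.prod_le_prod
            · exact fun k _ => Finset.sum_nonneg fun v _ =>
                Real.rpow_nonneg (Nat.cast_nonneg _) _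
            · intro k hk
              rw [hS, Function.update_of_ne (Finset.ne_of_mem_erase hk)]
              exact sum_rpow_le hp0 hp1 z
        _ = ((z:ℝ)^p/p)^(t-1) := by
            rw [Finset.prod_const, Finset.card_erase_of_mem (Finset.mem_univ j),
              Finset.card_univ, Fintype.card_fin]
    calc ∑ x ∈ Fj, g x ≤ c * ∑ x ∈ Fj, g (e x) := hsum1
      _ = c * ∑ y ∈ Finset.image e Fj, g y := by rw [hsum2]
      _ ≤ c * (((z:ℝ)^p/p)^(t-1)) := by
          apply mul_le_mul_of_nonneg_left _ hc0
          exact le_trans hsum3 (le_of_eq_of_le hsum4 hsum5)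
      _ = ((t:ℝ)*(a j : ℝ))^(1-p) * ((z:ℝ)^(p-1) * (((z:ℝ)^p/p)^(t-1))) := by
          rw [hc]; ring
  -- final combination
  have hfinal : ∑ j : Fin t, ((t:ℝ)*(a j : ℝ))^(1-p) * ((z:ℝ)^(p-1) * (((z:ℝ)^p/p)^(t-1)))
      = C * (z:ℝ)^(-1 + (t:ℝ)/(s:ℝ)) := by
    have hD : (z:ℝ)^(p-1) * (((z:ℝ)^p/p)^(t-1))
        = (z:ℝ)^(-1 + (t:ℝ)/(s:ℝ)) / p^(t-1) := by
      rw [div_pow, ← Real.rpow_natCast ((z:ℝ)^p) (t-1), ← Real.rpow_mul hz0.le,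
        ← mul_div_assoc, ← Real.rpow_add hz0]
      congr 2
      rw [Nat.cast_sub ht1, Nat.cast_one, hp_def]
      field_simp
      ring
    rw [← Finset.sum_mul, hD, hC]
    ring
  calc ∑ x ∈ F, (∏ k, (x k : ℝ))^(p-1)
      = ∑ x ∈ F, g x := Finset.sum_congr rfl (fun x _ =>
        (Real.finset_prod_rpow Finset.univ _ (fun i _ => Nat.cast_nonneg _) _).symm)
    _ ≤ ∑ x ∈ F, ∑ j : Fin t, if z ≤ t * (a j * x j) then g x else 0 :=
        Finset.sum_le_sum cover
    _ = ∑ j : Fin t, ∑ x ∈ F, if z ≤ t * (a j * x j) then g x else 0 := Finset.sum_comm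
    _ = ∑ j : Fin t, ∑ x ∈ F.filter (fun x => z ≤ t * (a j * x j)), g x := by
        exact Finset.sum_congr rfl fun j _ => (Finset.sum_filter _ _).symm
    _ ≤ ∑ j : Fin t, ((t:ℝ)*(a j : ℝ))^(1-p) * ((z:ℝ)^(p-1) * (((z:ℝ)^p/p)^(t-1))) :=
        Finset.sum_le_sum stepj
    _ = C * (z:ℝ)^(-1 + (t:ℝ)/(s:ℝ)) := hfinal
end

section
/- Fix an integer s ≥ 2, an integer t with 1 ≤ t ≤ s−1, and positive integers a_1, …, a_t. Then there is a constant C (depending on s, t, a_1, …, a_t) such that for every integer z ≥ 2, ∑ (x_1 ⋯ x_t)^{−1+1/s} (z − (a_1 x_1 + ⋯ + a_t x_t))^{−2t/s} ≤ C z^{−1/s} log z, where the sum runs over all t-tuples of positive integers (x_1, …, x_t) with a_1 x_1 + ⋯ + a_t x_t < z. -/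
/-!
Put `c = 1/s` and `d = t/s`, so that `c ≤ d ≤ 1 - c`. Grouping the tuples by `n = a·x` turns the
sum into `∑_{1 ≤ n < z} (z - n)^(-2d) F(n)`, where `F(n) = fiberSum c a n` sums `(∏ x_k)^(c-1)` over
the positive solutions of `a·x = n`. Peeling off the first coordinate writes `F` as a discrete
convolution, and in `∑_{b y < n} y^α (n - b y)^β` one of `b y`, `n - b y` is at least `n / 2`, so
the sum is `≪ n^α ∑_{m ≤ n} m^β + n^β ∑_{y ≤ n} y^α`. With `∑_{m ≤ n} m^(e-1) ≤ n^e / e` this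
gives `F(n) ≪ n^(d-1)` by induction on `t`. The same splitting bounds the outer sum by
`z^(d-1) ∑_{m ≤ z} m^(-2d) + z^(-d)`, and `∑_{m ≤ z} m^(-2d) ≤ z^(max(1-2d, 0)) (1 + log z)`
makes this `≪ z^(-c) log z`.
-/

open Finset Real

lemma rpow_le_rpow_neg_mul_rpow_of_le_mul {n k x E : ℝ} (hn : 0 < n) (hk : 0 < k)
    (h : n ≤ k * x) (hE : E ≤ 0) : x ^ E ≤ k ^ (-E) * n ^ E :=
  calc x ^ E ≤ (n / k) ^ E := rpow_le_rpow_of_nonpos (by positivity) (by rwa [div_le_iff₀' hk]) hE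
    _ = k ^ (-E) * n ^ E := by rw [div_rpow hn.le hk.le, rpow_neg hk.le, div_eq_inv_mul]

lemma mul_rpow_sub_one_le_rpow_sub_rpow {c x : ℝ} (hc0 : 0 < c) (hc1 : c ≤ 1) (hx : 1 ≤ x) :
    c * x ^ (c - 1) ≤ x ^ c - (x - 1) ^ c := by
  have hx0 : 0 < x := by linarith
  have bernoulli : (1 + -x⁻¹) ^ c ≤ 1 + c * -x⁻¹ :=
    rpow_one_add_le_one_add_mul_self (by simpa using inv_le_one_of_one_le₀ hx) hc0.le hc1
  have hfactor : (x - 1) ^ c = x ^ c * (1 + -x⁻¹) ^ c := by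
    rw [← mul_rpow hx0.le (by simpa using inv_le_one_of_one_le₀ hx)]
    congr 1
    field_simp
    ring
  have hpow : x ^ (c - 1) = x ^ c * x⁻¹ := by rw [rpow_sub_one hx0.ne', div_eq_mul_inv]
  rw [hfactor, hpow]
  nlinarith [rpow_pos_of_pos hx0 c]

lemma sum_Icc_rpow_sub_one_le {c : ℝ} (hc0 : 0 < c) (hc1 : c ≤ 1) (N : ℕ) :
    ∑ m ∈ Icc 1 N, (m : ℝ) ^ (c - 1) ≤ (N : ℝ) ^ c / c := by
  induction N with
  | zero => simp [zero_rpow hc0.ne']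
  | succ N ih =>
    have hstep := mul_rpow_sub_one_le_rpow_sub_rpow hc0 hc1 (x := (N + 1 : ℕ))
      (by exact_mod_cast Nat.le_add_left 1 N)
    rw [sum_Icc_succ_top (Nat.le_add_left 1 N)]
    push_cast at hstep ⊢
    rw [add_sub_cancel_right] at hstep
    rw [le_div_iff₀ hc0] at ih ⊢
    nlinarith

lemma sum_Icc_rpow_le_rpow_mul_one_add_log {β γ : ℝ} (hγ : 0 ≤ γ) (hβ : β ≤ γ - 1) (N : ℕ) :
    ∑ m ∈ Icc 1 N, (m : ℝ) ^ β ≤ (N : ℝ) ^ γ * (1 + log N) := by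
  have hharmonic : ∑ m ∈ Icc 1 N, (m : ℝ)⁻¹ ≤ 1 + log N := by
    simpa [harmonic_eq_sum_Icc] using harmonic_le_one_add_log N
  have hterm : ∀ m ∈ Icc 1 N, (m : ℝ) ^ β ≤ (N : ℝ) ^ γ * (m : ℝ)⁻¹ := by
    intro m hm
    obtain ⟨hm1, hmN⟩ := mem_Icc.1 hm
    have hm1' : (1 : ℝ) ≤ m := by exact_mod_cast hm1
    calc (m : ℝ) ^ β ≤ (m : ℝ) ^ (γ - 1) := rpow_le_rpow_of_exponent_le hm1' hβ
      _ = (m : ℝ) ^ γ * (m : ℝ)⁻¹ := by rw [rpow_sub_one (by positivity), div_eq_mul_inv]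
      _ ≤ (N : ℝ) ^ γ * (m : ℝ)⁻¹ := by gcongr
  calc ∑ m ∈ Icc 1 N, (m : ℝ) ^ β ≤ ∑ m ∈ Icc 1 N, (N : ℝ) ^ γ * (m : ℝ)⁻¹ := sum_le_sum hterm
    _ = (N : ℝ) ^ γ * ∑ m ∈ Icc 1 N, (m : ℝ)⁻¹ := (mul_sum ..).symm
    _ ≤ (N : ℝ) ^ γ * (1 + log N) := by gcongr

lemma rpow_mul_rpow_le_of_le_mul_add {u v n b α β : ℝ} (hu : 0 < u) (hv : 0 < v) (hn : 0 < n)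
    (hb : 0 < b) (h : n ≤ b * u + v) (hα : α ≤ 0) (hβ : β ≤ 0) :
    u ^ α * v ^ β ≤ (2 * b) ^ (-α) * n ^ α * v ^ β + 2 ^ (-β) * n ^ β * u ^ α := by
  rcases le_total n (2 * b * u) with hbu | hbu
  · calc u ^ α * v ^ β ≤ (2 * b) ^ (-α) * n ^ α * v ^ β := by
          gcongr; exact rpow_le_rpow_neg_mul_rpow_of_le_mul hn (by positivity) hbu hα
      _ ≤ _ := le_add_of_nonneg_right (by positivity)
  · calc u ^ α * v ^ β ≤ u ^ α * (2 ^ (-β) * n ^ β) := by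
          gcongr; exact rpow_le_rpow_neg_mul_rpow_of_le_mul hn two_pos (by linarith) hβ
      _ ≤ _ := by rw [mul_comm]; exact le_add_of_nonneg_left (by positivity)

lemma sum_filter_rpow_sub_mul_le_sum_Icc_rpow (b n : ℕ) (hb : 0 < b) (β : ℝ) :
    ∑ y ∈ (Icc 1 n).filter (fun y => b * y < n), ((n : ℝ) - b * y) ^ β ≤
      ∑ m ∈ Icc 1 n, (m : ℝ) ^ β := by
  have hinj : Set.InjOn (fun y => n - b * y) ((Icc 1 n).filter (fun y => b * y < n)) := by
    intro y hy y' hy' h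
    rw [mem_coe, mem_filter] at hy hy'
    exact Nat.eq_of_mul_eq_mul_left hb (by simp only at h; omega)
  calc ∑ y ∈ (Icc 1 n).filter (fun y => b * y < n), ((n : ℝ) - b * y) ^ β
      = ∑ m ∈ ((Icc 1 n).filter (fun y => b * y < n)).image (fun y => n - b * y), (m : ℝ) ^ β := by
        rw [sum_image hinj]
        refine sum_congr rfl fun y hy => ?_
        rw [Nat.cast_sub (mem_filter.1 hy).2.le]
        push_cast
        rfl
    _ ≤ ∑ m ∈ Icc 1 n, (m : ℝ) ^ β := by
        refine sum_le_sum_of_subset_of_nonneg ?_ fun _ _ _ => by positivity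
        intro m hm
        simp only [mem_image, mem_filter, mem_Icc] at hm ⊢
        omega

lemma sum_filter_rpow_mul_rpow_sub_le (b n : ℕ) (hb : 0 < b) {α β : ℝ} (hα : α ≤ 0)
    (hβ : β ≤ 0) :
    ∑ y ∈ (Icc 1 n).filter (fun y => b * y < n), (y : ℝ) ^ α * ((n : ℝ) - b * y) ^ β ≤
      (2 * b) ^ (-α) * (n : ℝ) ^ α * ∑ m ∈ Icc 1 n, (m : ℝ) ^ β +
        2 ^ (-β) * (n : ℝ) ^ β * ∑ y ∈ Icc 1 n, (y : ℝ) ^ α := by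
  set S := (Icc 1 n).filter (fun y => b * y < n)
  have hterm : ∀ y ∈ S, (y : ℝ) ^ α * ((n : ℝ) - b * y) ^ β ≤
      (2 * b) ^ (-α) * (n : ℝ) ^ α * ((n : ℝ) - b * y) ^ β +
        2 ^ (-β) * (n : ℝ) ^ β * (y : ℝ) ^ α := by
    intro y hy
    obtain ⟨⟨hy1, -⟩, hyn⟩ := by simpa only [S, mem_filter, mem_Icc] using hy
    have hyn' : (b : ℝ) * y < n := by exact_mod_cast hyn
    have hby : (0 : ℝ) < b * y := by positivity
    exact rpow_mul_rpow_le_of_le_mul_add (by positivity) (by linarith) (by linarith)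
      (by positivity) (by linarith) hα hβ
  calc ∑ y ∈ S, (y : ℝ) ^ α * ((n : ℝ) - b * y) ^ β
      ≤ ∑ y ∈ S, ((2 * b) ^ (-α) * (n : ℝ) ^ α * ((n : ℝ) - b * y) ^ β +
          2 ^ (-β) * (n : ℝ) ^ β * (y : ℝ) ^ α) := sum_le_sum hterm
    _ = (2 * b) ^ (-α) * (n : ℝ) ^ α * ∑ y ∈ S, ((n : ℝ) - b * y) ^ β +
          2 ^ (-β) * (n : ℝ) ^ β * ∑ y ∈ S, (y : ℝ) ^ α := by
        rw [sum_add_distrib, mul_sum, mul_sum]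
    _ ≤ _ := by
        gcongr
        · exact sum_filter_rpow_sub_mul_le_sum_Icc_rpow b n hb β
        · exact filter_subset _ _

lemma sum_piFinset_succ {α M : Type*} [AddCommMonoid M] {t : ℕ} (S : Fin (t + 1) → Finset α)
    (f : (Fin (t + 1) → α) → M) :
    ∑ x ∈ Fintype.piFinset S, f x =
      ∑ y ∈ S 0, ∑ x ∈ Fintype.piFinset (Fin.tail S), f (Fin.cons y x) := by
  have h := filter_piFinset_eq_map_consEquiv S (fun _ => True)
  simp only [filter_true] at h
  rw [h, sum_map, sum_product]
  rfl

section FiberSum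

variable {t : ℕ}

noncomputable def fiberSum (c : ℝ) (a : Fin t → ℕ) (n : ℕ) : ℝ :=
  ∑ x ∈ (Fintype.piFinset fun _ => Icc 1 n).filter (fun x => ∑ k, a k * x k = n),
    (∏ k, (x k : ℝ)) ^ (c - 1)

lemma filter_piFinset_Icc_eq_of_le {a : Fin t → ℕ} (ha : ∀ k, 0 < a k) {n N : ℕ} (h : n ≤ N) :
    (Fintype.piFinset fun _ => Icc 1 N).filter (fun x => ∑ k, a k * x k = n) =
      (Fintype.piFinset fun _ => Icc 1 n).filter (fun x => ∑ k, a k * x k = n) := by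
  ext x
  simp only [mem_filter, Fintype.mem_piFinset, mem_Icc, and_congr_left_iff]
  intro hx
  refine forall_congr' fun k => and_congr_right fun _ => ⟨fun _ => ?_, fun hk => hk.trans h⟩
  calc x k ≤ a k * x k := Nat.le_mul_of_pos_left _ (ha k)
    _ ≤ ∑ j, a j * x j :=
        single_le_sum (f := fun j => a j * x j) (fun _ _ => Nat.zero_le _) (mem_univ k)
    _ = n := hx

lemma fiberSum_zero (ht : 0 < t) (c : ℝ) (a : Fin t → ℕ) : fiberSum c a 0 = 0 := by
  refine sum_eq_zero fun x hx => ?_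
  have := (Fintype.mem_piFinset.1 (mem_filter.1 hx).1) ⟨0, ht⟩
  simp at this

lemma fiberSum_cons (c : ℝ) (a : Fin (t + 1) → ℕ) (ha : ∀ k, 0 < a k) (n : ℕ) :
    fiberSum c a n = ∑ y ∈ (Icc 1 n).filter (fun y => a 0 * y ≤ n),
      (y : ℝ) ^ (c - 1) * fiberSum c (Fin.tail a) (n - a 0 * y) := by
  rw [fiberSum, sum_filter, sum_piFinset_succ, sum_filter]
  refine sum_congr rfl fun y _ => ?_
  rw [fiberSum, ← filter_piFinset_Icc_eq_of_le (a := Fin.tail a) (fun k => ha k.succ)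
    (Nat.sub_le n _), mul_sum, sum_filter]
  simp only [Fin.sum_univ_succ, Fin.prod_univ_succ, Fin.cons_zero, Fin.cons_succ, Fin.tail]
  split_ifs with hy
  · refine sum_congr rfl fun x _ => ?_
    rw [mul_rpow (by positivity) (by positivity)]
    congr 1
    exact propext (by omega)
  · exact sum_eq_zero fun x _ => if_neg (by omega)

lemma fiberSum_le_of_fin_one {c : ℝ} (hc : c ≤ 1) (a : Fin 1 → ℕ) (ha : 0 < a 0) {n : ℕ}
    (hn : 0 < n) : fiberSum c a n ≤ (a 0 : ℝ) ^ (1 - c) * (n : ℝ) ^ (c - 1) := by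
  set F := (Fintype.piFinset fun _ => Icc 1 n).filter (fun x : Fin 1 → ℕ => ∑ k, a k * x k = n)
  have hF : ∀ x ∈ F, a 0 * x 0 = n := fun x hx => by simpa using (mem_filter.1 hx).2
  have hcard : F.card ≤ 1 := card_le_one.2 fun x hx x' hx' => funext fun i => by
    rw [Subsingleton.elim i 0]
    exact Nat.eq_of_mul_eq_mul_left ha ((hF x hx).trans (hF x' hx').symm)
  have hterm : ∀ x ∈ F, (∏ k, (x k : ℝ)) ^ (c - 1) ≤ (a 0 : ℝ) ^ (1 - c) * (n : ℝ) ^ (c - 1) := by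
    intro x hx
    rw [Fin.prod_univ_one, show 1 - c = -(c - 1) by ring]
    refine rpow_le_rpow_neg_mul_rpow_of_le_mul (n := n) (k := a 0) (E := c - 1) (by positivity)
      (by positivity) ?_ (by linarith)
    exact_mod_cast (hF x hx).ge
  calc fiberSum c a n ≤ F.card • ((a 0 : ℝ) ^ (1 - c) * (n : ℝ) ^ (c - 1)) :=
        sum_le_card_nsmul _ _ _ hterm
    _ ≤ (a 0 : ℝ) ^ (1 - c) * (n : ℝ) ^ (c - 1) := by
        rw [nsmul_eq_mul]
        exact mul_le_of_le_one_left (by positivity) (by exact_mod_cast hcard)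

lemma fiberSum_cons_le {c d C : ℝ} (hc0 : 0 < c) (hc1 : c ≤ 1) (hd0 : 0 < d) (hd1 : d ≤ 1)
    (hC : 0 ≤ C) (ht : 0 < t) (a : Fin (t + 1) → ℕ) (ha : ∀ k, 0 < a k)
    (htail : ∀ m, 0 < m → fiberSum c (Fin.tail a) m ≤ C * (m : ℝ) ^ (d - 1)) {n : ℕ} (hn : 0 < n) :
    fiberSum c a n ≤ C * ((2 * a 0) ^ (1 - c) / d + 2 ^ (1 - d) / c) * (n : ℝ) ^ (c + d - 1) := by
  set S := (Icc 1 n).filter (fun y => a 0 * y < n)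
  have hn' : (0 : ℝ) < n := by exact_mod_cast hn
  have hdrop :
      fiberSum c a n = ∑ y ∈ S, (y : ℝ) ^ (c - 1) * fiberSum c (Fin.tail a) (n - a 0 * y) := by
    rw [fiberSum_cons c a ha]
    refine (sum_subset (fun y hy => mem_filter.2 ⟨(mem_filter.1 hy).1, (mem_filter.1 hy).2.le⟩)
      fun y hy hyS => ?_).symm
    simp only [mem_filter, not_and, not_lt] at hy hyS
    rw [Nat.sub_eq_zero_of_le (hyS hy.1), fiberSum_zero ht, mul_zero]
  have hpow : ∀ e₁ e₂ : ℝ, e₁ + e₂ = c + d - 1 →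
      (n : ℝ) ^ e₁ * (n : ℝ) ^ e₂ = (n : ℝ) ^ (c + d - 1) := fun e₁ e₂ h => by
    rw [← rpow_add hn', h]
  have hcd := hpow (c - 1) d (by ring)
  have hdc := hpow (d - 1) c (by ring)
  calc fiberSum c a n
      ≤ ∑ y ∈ S, (y : ℝ) ^ (c - 1) * (C * ((n : ℝ) - a 0 * y) ^ (d - 1)) := by
        rw [hdrop]
        gcongr with y hy
        obtain ⟨-, hy⟩ := mem_filter.1 hy
        have := htail (n - a 0 * y) (by omega)
        rwa [Nat.cast_sub hy.le, Nat.cast_mul] at this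
    _ = C * ∑ y ∈ S, (y : ℝ) ^ (c - 1) * ((n : ℝ) - a 0 * y) ^ (d - 1) := by
        rw [mul_sum]
        exact sum_congr rfl fun _ _ => by ring
    _ ≤ C * ((2 * a 0) ^ (-(c - 1)) * (n : ℝ) ^ (c - 1) * ∑ m ∈ Icc 1 n, (m : ℝ) ^ (d - 1) +
          2 ^ (-(d - 1)) * (n : ℝ) ^ (d - 1) * ∑ y ∈ Icc 1 n, (y : ℝ) ^ (c - 1)) := by
        gcongr
        exact sum_filter_rpow_mul_rpow_sub_le _ n (ha 0) (by linarith) (by linarith)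
    _ ≤ C * ((2 * a 0) ^ (-(c - 1)) * (n : ℝ) ^ (c - 1) * ((n : ℝ) ^ d / d) +
          2 ^ (-(d - 1)) * (n : ℝ) ^ (d - 1) * ((n : ℝ) ^ c / c)) := by
        gcongr
        · exact sum_Icc_rpow_sub_one_le hd0 hd1 n
        · exact sum_Icc_rpow_sub_one_le hc0 hc1 n
    _ = C * ((2 * a 0) ^ (1 - c) / d + 2 ^ (1 - d) / c) * (n : ℝ) ^ (c + d - 1) := by
        rw [neg_sub, neg_sub]
        linear_combination (C * (2 * a 0) ^ (1 - c) / d) * hcd + (C * 2 ^ (1 - d) / c) * hdc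

theorem exists_fiberSum_le_rpow {c : ℝ} (hc : 0 < c) (ht : 0 < t) (htc : t * c ≤ 1)
    (a : Fin t → ℕ) (ha : ∀ k, 0 < a k) :
    ∃ C, 0 < C ∧ ∀ n, 0 < n → fiberSum c a n ≤ C * (n : ℝ) ^ (t * c - 1) := by
  induction t, ht using Nat.le_induction with
  | base =>
    refine ⟨(a 0 : ℝ) ^ (1 - c), by have := ha 0; positivity, fun n hn => ?_⟩
    simpa using fiberSum_le_of_fin_one (by simpa using htc) a (ha 0) hn
  | succ t ht ih =>
    push_cast at htc
    have htc' : t * c ≤ 1 := by nlinarith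
    have hc1 : c ≤ 1 := by nlinarith
    obtain ⟨C, hC, hCtail⟩ := ih htc' (Fin.tail a) fun k => ha k.succ
    refine ⟨C * ((2 * a 0) ^ (1 - c) / (t * c) + 2 ^ (1 - t * c) / c), by positivity,
      fun n hn => ?_⟩
    have := fiberSum_cons_le hc hc1 (by positivity) htc' hC.le ht a ha hCtail hn
    rwa [show c + t * c - 1 = ((t + 1 : ℕ) : ℝ) * c - 1 by push_cast; ring] at this

end FiberSum

lemma sum_filter_sum_lt_eq_sum_Ico_fiberSum {t : ℕ} (ht : 0 < t) (c e : ℝ) (a : Fin t → ℕ)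
    (ha : ∀ k, 0 < a k) (z : ℕ) :
    ∑ x ∈ (Fintype.piFinset fun _ : Fin t => Icc 1 z).filter (fun x => ∑ k, a k * x k < z),
        (∏ k, (x k : ℝ)) ^ (c - 1) * ((z : ℝ) - ∑ k, (a k : ℝ) * (x k : ℝ)) ^ e =
      ∑ n ∈ Ico 1 z, ((z : ℝ) - n) ^ e * fiberSum c a n := by
  have hmaps : ∀ x ∈ (Fintype.piFinset fun _ : Fin t => Icc 1 z).filter
      (fun x => ∑ k, a k * x k < z), ∑ k, a k * x k ∈ Ico 1 z := by
    intro x hx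
    obtain ⟨hbox, hlt⟩ := mem_filter.1 hx
    have hx0 := (mem_Icc.1 (Fintype.mem_piFinset.1 hbox ⟨0, ht⟩)).1
    have : a ⟨0, ht⟩ * x ⟨0, ht⟩ ≤ ∑ k, a k * x k :=
      single_le_sum (f := fun k => a k * x k) (fun _ _ => Nat.zero_le _) (mem_univ _)
    exact mem_Ico.2 ⟨le_trans (Nat.mul_pos (ha _) hx0) this, hlt⟩
  rw [← sum_fiberwise_of_maps_to hmaps]
  refine sum_congr rfl fun n hn => ?_
  obtain ⟨-, hnz⟩ := mem_Ico.1 hn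
  rw [filter_filter, fiberSum, mul_sum,
    ← filter_piFinset_Icc_eq_of_le ha hnz.le]
  have hset : (Fintype.piFinset fun _ : Fin t => Icc 1 z).filter
        (fun x => ∑ k, a k * x k < z ∧ ∑ k, a k * x k = n) =
      (Fintype.piFinset fun _ : Fin t => Icc 1 z).filter (fun x => ∑ k, a k * x k = n) :=
    filter_congr fun x _ => ⟨And.right, fun h => ⟨h ▸ hnz, h⟩⟩
  rw [hset]
  refine sum_congr rfl fun x hx => ?_
  have hsum : ∑ k, (a k : ℝ) * (x k : ℝ) = n := by exact_mod_cast (mem_filter.1 hx).2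
  rw [hsum, mul_comm]

lemma sum_Ico_rpow_mul_rpow_sub_le {c d : ℝ} (hc : 0 < c) (hcd : c ≤ d) (hdc : d ≤ 1 - c)
    {z : ℕ} (hz : 0 < z) :
    ∑ n ∈ Ico 1 z, (n : ℝ) ^ (d - 1) * ((z : ℝ) - n) ^ (-(2 * d)) ≤
      (2 ^ (1 - d) + 2 ^ (2 * d) / d) * (z : ℝ) ^ (-c) * (1 + log z) := by
  have hd : 0 < d := by linarith
  have hz' : (1 : ℝ) ≤ z := by exact_mod_cast hz
  have hlog : 0 ≤ log z := log_nonneg hz'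
  have hIco : (Icc 1 z).filter (fun n => n < z) = Ico 1 z := by
    ext n; simp only [mem_filter, mem_Icc, mem_Ico]; omega
  have hconv := sum_filter_rpow_mul_rpow_sub_le 1 z one_pos (α := d - 1) (β := -(2 * d))
    (by linarith) (by linarith)
  simp only [Nat.cast_one, one_mul, mul_one, neg_sub, neg_neg] at hconv
  rw [hIco] at hconv
  set γ := max (1 - 2 * d) 0
  have hγ : γ ≤ 1 - d - c := max_le (by linarith) (by linarith)
  have hfar : (z : ℝ) ^ (d - 1) * (z : ℝ) ^ γ ≤ (z : ℝ) ^ (-c) := by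
    rw [← rpow_add (by positivity)]
    exact rpow_le_rpow_of_exponent_le hz' (by linarith)
  have hnear : (z : ℝ) ^ (-(2 * d)) * (z : ℝ) ^ d ≤ (z : ℝ) ^ (-c) := by
    rw [← rpow_add (by positivity)]
    exact rpow_le_rpow_of_exponent_le hz' (by linarith)
  calc ∑ n ∈ Ico 1 z, (n : ℝ) ^ (d - 1) * ((z : ℝ) - n) ^ (-(2 * d))
      ≤ 2 ^ (1 - d) * (z : ℝ) ^ (d - 1) * ∑ m ∈ Icc 1 z, (m : ℝ) ^ (-(2 * d)) +
          2 ^ (2 * d) * (z : ℝ) ^ (-(2 * d)) * ∑ n ∈ Icc 1 z, (n : ℝ) ^ (d - 1) := hconv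
    _ ≤ 2 ^ (1 - d) * (z : ℝ) ^ (d - 1) * ((z : ℝ) ^ γ * (1 + log z)) +
          2 ^ (2 * d) * (z : ℝ) ^ (-(2 * d)) * ((z : ℝ) ^ d / d) := by
        gcongr
        · exact sum_Icc_rpow_le_rpow_mul_one_add_log (le_max_right _ _)
            (by linarith [le_max_left (1 - 2 * d) 0]) z
        · exact sum_Icc_rpow_sub_one_le (by linarith) (by linarith) z
    _ = 2 ^ (1 - d) * ((z : ℝ) ^ (d - 1) * (z : ℝ) ^ γ) * (1 + log z) +
          2 ^ (2 * d) / d * ((z : ℝ) ^ (-(2 * d)) * (z : ℝ) ^ d) := by ring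
    _ ≤ 2 ^ (1 - d) * (z : ℝ) ^ (-c) * (1 + log z) +
          2 ^ (2 * d) / d * ((z : ℝ) ^ (-c) * (1 + log z)) := by
        gcongr 2 ^ (1 - d) * ?_ * (1 + log z) + 2 ^ (2 * d) / d * ?_
        exact hnear.trans (le_mul_of_one_le_right (by positivity) (by linarith))
    _ = (2 ^ (1 - d) + 2 ^ (2 * d) / d) * (z : ℝ) ^ (-c) * (1 + log z) := by ring

lemma one_add_log_le_mul_log {x : ℝ} (hx : 2 ≤ x) : 1 + log x ≤ (1 + (log 2)⁻¹) * log x := by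
  have hlog2 : 0 < log 2 := log_pos one_lt_two
  have : 1 ≤ (log 2)⁻¹ * log x := by
    rw [inv_mul_eq_div, le_div_iff₀ hlog2, one_mul]
    exact log_le_log two_pos hx
  linarith

theorem sum_over_linear_sublevel_set_general (s t : ℕ) (ht1 : 1 ≤ t) (hts : t ≤ s - 1)
    (a : Fin t → ℕ) (ha : ∀ k, 1 ≤ a k) :
    ∃ C : ℝ, 0 < C ∧ ∀ z : ℕ, 2 ≤ z →
      ∑ x ∈ (Fintype.piFinset fun _ : Fin t => Finset.Icc 1 z).filter
            (fun x => ∑ k, a k * x k < z),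
          (∏ k, (x k : ℝ)) ^ (-1 + 1 / (s : ℝ)) *
            ((z : ℝ) - ∑ k, (a k : ℝ) * (x k : ℝ)) ^ (-(2 * (t : ℝ)) / (s : ℝ))
        ≤ C * (z : ℝ) ^ (-(1 : ℝ) / (s : ℝ)) * Real.log z := by
  have hs : (0 : ℝ) < s := Nat.cast_pos.2 (by omega)
  set c := 1 / (s : ℝ)
  set d := (t : ℝ) * c
  have hc : 0 < c := by positivity
  have hcd : c ≤ d := le_mul_of_one_le_left hc.le (by exact_mod_cast ht1)
  have hdc : d ≤ 1 - c := by
    rw [le_sub_iff_add_le, show d + c = (t + 1) / s by simp only [d, c]; ring, div_le_one hs]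
    exact_mod_cast (show t + 1 ≤ s by omega)
  obtain ⟨C, hC, hfiber⟩ := exists_fiberSum_le_rpow hc ht1 (by linarith) a ha
  set K := 2 ^ (1 - d) + 2 ^ (2 * d) / d
  refine ⟨C * K * (1 + (log 2)⁻¹), by positivity, fun z hz => ?_⟩
  rw [show -1 + c = c - 1 by ring, show -(2 * (t : ℝ)) / s = -(2 * d) by simp only [d, c]; ring,
    show -(1 : ℝ) / s = -c by simp only [c]; ring,
    sum_filter_sum_lt_eq_sum_Ico_fiberSum ht1 _ _ a ha]
  have hterm : ∀ n ∈ Ico 1 z, ((z : ℝ) - n) ^ (-(2 * d)) * fiberSum c a n ≤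
      C * ((n : ℝ) ^ (d - 1) * ((z : ℝ) - n) ^ (-(2 * d))) := fun n hn => by
    obtain ⟨hn1, hnz⟩ := mem_Ico.1 hn
    have : (0 : ℝ) ≤ z - n := sub_nonneg.2 (by exact_mod_cast hnz.le)
    nlinarith [hfiber n hn1, rpow_nonneg this (-(2 * d))]
  calc _ ≤ C * ∑ n ∈ Ico 1 z, (n : ℝ) ^ (d - 1) * ((z : ℝ) - n) ^ (-(2 * d)) := by
        rw [mul_sum]; exact sum_le_sum hterm
    _ ≤ C * (K * (z : ℝ) ^ (-c) * (1 + log z)) := by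
        gcongr; exact sum_Ico_rpow_mul_rpow_sub_le hc hcd hdc (by omega)
    _ ≤ C * (K * (z : ℝ) ^ (-c) * ((1 + (log 2)⁻¹) * log z)) := by
        gcongr; exact one_add_log_le_mul_log (by exact_mod_cast hz)
    _ = _ := by ring

/-- Lemma (technical, part ii): for `1 ≤ t ≤ s − 1` and positive integers `a 1, …, a t`,
`∑_{a·x < z, x positive} (x 1 ⋯ x t)^{−1+1/s} (z − a·x)^{−2t/s} ≤ C z^{−1/s} log z`
for all `z ≥ 2`. -/
theorem sum_over_linear_sublevel_set (s t : ℕ) (hs : 2 ≤ s) (ht1 : 1 ≤ t) (hts : t ≤ s - 1)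
    (a : Fin t → ℕ) (ha : ∀ k, 1 ≤ a k) :
    ∃ C : ℝ, 0 < C ∧ ∀ z : ℕ, 2 ≤ z →
      ∑ x ∈ (Fintype.piFinset fun _ : Fin t => Finset.Icc 1 z).filter
            (fun x => ∑ k, a k * x k < z),
          (∏ k, (x k : ℝ)) ^ (-1 + 1 / (s : ℝ)) *
            ((z : ℝ) - ∑ k, (a k : ℝ) * (x k : ℝ)) ^ (-(2 * (t : ℝ)) / (s : ℝ))
        ≤ C * (z : ℝ) ^ (-(1 : ℝ) / (s : ℝ)) * Real.log z :=
  sum_over_linear_sublevel_set_general s t ht1 hts a ha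
end
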